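/- For any λ > λ₀, set μ := μ(λ) = ln(y(λ) + √(y(λ)² − 1)), c := λ/μ, and define V : [0,1] → ℝ by V(x) = (β/(sinh(√(λ/d))·Δ(λ)))·[√(λd)·cosh(√(λ/d)·(1−x)) + α·sinh(√(λ/d)·(1−x))] + (β·e^{−μ}/(sinh(√(λ/d))·Δ(λ)))·[√(λd)·cosh(√(λ/d)·x) + α·sinh(√(λ/d)·x)]. Then V(x) > 0 for all x ∈ [0,1], and the family (v_j(t,x), ρ_j(t)) := (e^{−μ(j−ct)}·V(x), e^{−μ(j−ct)}) solves the linearized city-road system: ∂_t v_j = d ∂_x² v_j on (0,1), ρ_j'(t) = f'(0)·ρ_j(t) + α(v_j(t,0) + v_{j−1}(t,1)) − 2β ρ_j(t), with boundary conditions −d ∂_x v_j(t,0) + α v_j(t,0) = β ρ_j(t) and d ∂_x v_j(t,1) + α v_j(t,1) = β ρ_{j+1}(t), for all t > 0 and j ∈ ℤ. -/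

import Mathlib

/-!
The profile is `V(x) = C (g(1 - x) + e^{-μ} g(x))` with `g(z) = √(λd) cosh(qz) + α sinh(qz)`,
`q = √(λ/d)` and `C = β / (sinh q · Δ(λ))`, so `d V'' = λ V` and the heat equation reduces to
`μ c = λ`. Both Robin conditions come down to `sinh q · Δ(λ) = d g'(1) + α g(1)` together with
`d g'(0) = α g(0)`. The equation for `ρ_j` is the dispersion relation
`α (V(0) + e^μ V(1)) = λ + 2β − f'(0)`, which is the definition of `y(λ)` rewritten with
`e^μ + e^{-μ} = 2 y(λ)`: indeed `μ(λ) = arcosh y(λ)`, real and positive since `y(λ) > 1`.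
-/

open Set Filter

noncomputable section

def Δfun (α d lam : ℝ) : ℝ :=
  α ^ 2 + d * lam + 2 * α * Real.sqrt (d * lam) / Real.tanh (Real.sqrt (lam / d))

/-- `r` stands for `f'(0)`. -/
def yfun (α β d r lam : ℝ) : ℝ :=
  (Δfun α d lam / (2 * α * β) * (lam + 2 * β - r)
      - (α + Real.sqrt (d * lam) / Real.tanh (Real.sqrt (lam / d))))
    * (Real.sinh (Real.sqrt (lam / d)) / Real.sqrt (d * lam))

def mufun (α β d r lam : ℝ) : ℝ :=
  Real.log (yfun α β d r lam + Real.sqrt ((yfun α β d r lam) ^ 2 - 1))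

def Vprof (α β d lam mu x : ℝ) : ℝ :=
  β / (Real.sinh (Real.sqrt (lam / d)) * Δfun α d lam) *
      (Real.sqrt (lam * d) * Real.cosh (Real.sqrt (lam / d) * (1 - x))
        + α * Real.sinh (Real.sqrt (lam / d) * (1 - x)))
    + β * Real.exp (-mu) / (Real.sinh (Real.sqrt (lam / d)) * Δfun α d lam) *
      (Real.sqrt (lam * d) * Real.cosh (Real.sqrt (lam / d) * x)
        + α * Real.sinh (Real.sqrt (lam / d) * x))

open Real

def hypComb (A B q z : ℝ) : ℝ := A * cosh (q * z) + B * sinh (q * z)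

section HypComb

variable (A B q : ℝ)

@[simp] lemma hypComb_zero : hypComb A B q 0 = A := by simp [hypComb]

lemma hasDerivAt_hypComb (x : ℝ) : HasDerivAt (hypComb A B q) (q * hypComb B A q x) x := by
  have hlin : HasDerivAt (fun z => q * z) q x := by simpa using (hasDerivAt_id x).const_mul q
  refine ((((hasDerivAt_cosh _).comp x hlin).const_mul A).add
    (((hasDerivAt_sinh _).comp x hlin).const_mul B)).congr_deriv ?_
  simp only [hypComb]; ring

lemma hasDerivAt_hypComb_one_sub (x : ℝ) :
    HasDerivAt (fun z => hypComb A B q (1 - z)) (-(q * hypComb B A q (1 - x))) x := by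
  refine ((hasDerivAt_hypComb A B q (1 - x)).comp x ((hasDerivAt_id x).const_sub 1)).congr_deriv ?_
  ring

variable {A B q} in
lemma hypComb_pos {z : ℝ} (hA : 0 < A) (hB : 0 ≤ B) (hqz : 0 ≤ q * z) : 0 < hypComb A B q z :=
  add_pos_of_pos_of_nonneg (mul_pos hA (cosh_pos _)) (mul_nonneg hB (sinh_nonneg_iff.mpr hqz))

end HypComb

lemma sqrt_mul_eq_mul_sqrt_div {d : ℝ} (hd : 0 < d) (lam : ℝ) : √(lam * d) = d * √(lam / d) := by
  rw [show lam * d = d ^ 2 * (lam / d) by field_simp, sqrt_mul (sq_nonneg d), sqrt_sq hd.le]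

section Profile

variable {α β d lam : ℝ}

lemma sinh_mul_Δfun (hd : 0 < d) (hlam : 0 < lam) :
    sinh √(lam / d) * Δfun α d lam
      = d * (√(lam / d) * hypComb α √(lam * d) √(lam / d) 1)
        + α * hypComb √(lam * d) α √(lam / d) 1 := by
  have hsinh : sinh √(lam / d) ≠ 0 := (sinh_pos_iff.mpr (sqrt_pos.mpr (by positivity))).ne'
  have hq2 : d * √(lam / d) ^ 2 = lam := by
    rw [sq_sqrt (by positivity)]; field_simp
  rw [Δfun, hypComb, hypComb, mul_comm d lam, sqrt_mul_eq_mul_sqrt_div hd, tanh_eq_sinh_div_cosh]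
  field_simp
  linear_combination (-(sinh √(lam / d) * d)) * hq2

lemma sinh_mul_Δfun_pos (hα : 0 < α) (hd : 0 < d) (hlam : 0 < lam) :
    0 < sinh √(lam / d) * Δfun α d lam := by
  have hq : 0 ≤ √(lam / d) * 1 := by simp [sqrt_nonneg]
  have hK : 0 < √(lam * d) := sqrt_pos.mpr (by positivity)
  have h₁ := hypComb_pos hα hK.le hq
  have h₂ := hypComb_pos hK hα.le hq
  rw [sinh_mul_Δfun hd hlam]
  positivity

lemma yfun_mul_sqrt (hα : α ≠ 0) (hβ : β ≠ 0) (hd : 0 < d) (hlam : 0 < lam) (r : ℝ) :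
    2 * α * β * (yfun α β d r lam * √(lam * d) + hypComb √(lam * d) α √(lam / d) 1)
      = sinh √(lam / d) * Δfun α d lam * (lam + 2 * β - r) := by
  have hsinh : sinh √(lam / d) ≠ 0 := (sinh_pos_iff.mpr (sqrt_pos.mpr (by positivity))).ne'
  have hK : √(lam * d) ≠ 0 := (sqrt_pos.mpr (by positivity)).ne'
  have hcosh : cosh √(lam / d) ≠ 0 := (cosh_pos _).ne'
  rw [yfun, hypComb, mul_comm d lam, tanh_eq_sinh_div_cosh]
  field_simp
  ring

lemma Vprof_eq (α β d lam mu : ℝ) :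
    Vprof α β d lam mu = fun x => β / (sinh √(lam / d) * Δfun α d lam) *
      (hypComb √(lam * d) α √(lam / d) (1 - x)
        + exp (-mu) * hypComb √(lam * d) α √(lam / d) x) := by
  funext x; simp only [Vprof, hypComb]; ring

lemma hasDerivAt_Vprof (α β d lam mu x : ℝ) :
    HasDerivAt (Vprof α β d lam mu) (β / (sinh √(lam / d) * Δfun α d lam) *
      (√(lam / d) * (exp (-mu) * hypComb α √(lam * d) √(lam / d) x
        - hypComb α √(lam * d) √(lam / d) (1 - x)))) x := by
  rw [Vprof_eq]
  refine (((hasDerivAt_hypComb_one_sub _ _ _ x).add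
    ((hasDerivAt_hypComb _ _ _ x).const_mul (exp (-mu)))).const_mul _).congr_deriv ?_
  ring

lemma deriv_Vprof (α β d lam mu : ℝ) :
    deriv (Vprof α β d lam mu) = fun x => β / (sinh √(lam / d) * Δfun α d lam) *
      (√(lam / d) * (exp (-mu) * hypComb α √(lam * d) √(lam / d) x
        - hypComb α √(lam * d) √(lam / d) (1 - x))) :=
  funext fun x => (hasDerivAt_Vprof α β d lam mu x).deriv

lemma hasDerivAt_deriv_Vprof (α β d lam mu x : ℝ) :
    HasDerivAt (deriv (Vprof α β d lam mu)) (√(lam / d) ^ 2 * Vprof α β d lam mu x) x := by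
  rw [deriv_Vprof, Vprof_eq]
  refine ((((hasDerivAt_hypComb _ _ _ x).const_mul (exp (-mu))).sub
    (hasDerivAt_hypComb_one_sub _ _ _ x)).const_mul _).const_mul _ |>.congr_deriv ?_
  ring

lemma mul_deriv_deriv_Vprof (hd : 0 < d) (hlam : 0 ≤ lam) (mu x : ℝ) :
    d * deriv (deriv (Vprof α β d lam mu)) x = lam * Vprof α β d lam mu x := by
  rw [(hasDerivAt_deriv_Vprof α β d lam mu x).deriv, ← mul_assoc, sq_sqrt (by positivity),
    mul_div_cancel₀ _ hd.ne']

lemma robin_Vprof_zero (hα : 0 < α) (hd : 0 < d) (hlam : 0 < lam) (mu : ℝ) :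
    -d * deriv (Vprof α β d lam mu) 0 + α * Vprof α β d lam mu 0 = β := by
  have hΔ := (sinh_mul_Δfun_pos hα hd hlam).ne'
  have hC := div_mul_cancel₀ β hΔ
  have hS := sinh_mul_Δfun (α := α) hd hlam
  rw [deriv_Vprof, Vprof_eq]
  simp only [sub_zero, hypComb_zero]
  rw [sqrt_mul_eq_mul_sqrt_div hd] at hS ⊢
  linear_combination hC - β / (sinh √(lam / d) * Δfun α d lam) * hS

lemma robin_Vprof_one (hα : 0 < α) (hd : 0 < d) (hlam : 0 < lam) (mu : ℝ) :
    d * deriv (Vprof α β d lam mu) 1 + α * Vprof α β d lam mu 1 = β * exp (-mu) := by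
  have hΔ := (sinh_mul_Δfun_pos hα hd hlam).ne'
  have hC := div_mul_cancel₀ β hΔ
  have hS := sinh_mul_Δfun (α := α) hd hlam
  rw [deriv_Vprof, Vprof_eq]
  simp only [sub_self, hypComb_zero]
  rw [sqrt_mul_eq_mul_sqrt_div hd] at hS ⊢
  linear_combination exp (-mu) * (hC - β / (sinh √(lam / d) * Δfun α d lam) * hS)

lemma Vprof_dispersion (hα : 0 < α) (hβ : 0 < β) (hd : 0 < d) (hlam : 0 < lam) {r mu : ℝ}
    (hmu : cosh mu = yfun α β d r lam) :
    α * (Vprof α β d lam mu 0 + exp mu * Vprof α β d lam mu 1) = lam + 2 * β - r := by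
  have hΔ := (sinh_mul_Δfun_pos hα hd hlam).ne'
  have hD := inv_mul_cancel₀ hΔ
  have hy := yfun_mul_sqrt hα.ne' hβ.ne' hd hlam r
  have hexp : exp mu * exp (-mu) = 1 := by rw [← exp_add, add_neg_cancel, exp_zero]
  rw [cosh_eq] at hmu
  rw [Vprof_eq]
  simp only [sub_zero, sub_self, hypComb_zero]
  set C := β / (sinh √(lam / d) * Δfun α d lam)
  linear_combination α * C * hypComb √(lam * d) α √(lam / d) 1 * hexp
    + 2 * α * C * √(lam * d) * hmu + (sinh √(lam / d) * Δfun α d lam)⁻¹ * hy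
    + (lam + 2 * β - r) * hD

lemma Vprof_pos (hα : 0 < α) (hβ : 0 < β) (hd : 0 < d) (hlam : 0 < lam) (mu : ℝ) {x : ℝ}
    (hx : x ∈ Icc 0 1) : 0 < Vprof α β d lam mu x := by
  have hq := sqrt_nonneg (lam / d)
  have hK := sqrt_pos.mpr (mul_pos hlam hd)
  have h₁ := hypComb_pos (z := 1 - x) hK hα.le (mul_nonneg hq (sub_nonneg.2 hx.2))
  have h₂ := hypComb_pos (z := x) hK hα.le (mul_nonneg hq hx.1)
  have := sinh_mul_Δfun_pos hα hd hlam
  rw [Vprof_eq]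
  positivity

end Profile

lemma hasDerivAt_exp_travelling (mu c a t : ℝ) :
    HasDerivAt (fun s => exp (-mu * (a - c * s))) (mu * c * exp (-mu * (a - c * t))) t := by
  have h : HasDerivAt (fun s => -mu * (a - c * s)) (mu * c) t := by
    simpa using (((hasDerivAt_id t).const_mul c).const_sub a).const_mul (-mu)
  simpa [mul_comm] using h.exp

theorem exponential_solutions_linearized_general
    (α β d : ℝ) (hα : 0 < α) (hβ : 0 < β) (hd : 0 < d)
    (f : ℝ → ℝ)
    (lam0 : ℝ) (hlam0 : 0 < lam0)
    (hygt : ∀ lam' : ℝ, lam0 < lam' → 1 < yfun α β d (deriv f 0) lam')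
    (lam : ℝ) (hlam : lam0 < lam)
    (mu c : ℝ) (hmu : mu = mufun α β d (deriv f 0) lam) (hc : c = lam / mu) :
    (∀ x ∈ Icc (0:ℝ) 1, 0 < Vprof α β d lam mu x) ∧
    (∀ j : ℤ, ∀ t : ℝ, 0 < t → ∀ x ∈ Ioo (0:ℝ) 1,
      deriv (fun s => Real.exp (-mu * ((j : ℝ) - c * s)) * Vprof α β d lam mu x) t
        = d * deriv (deriv
            (fun y => Real.exp (-mu * ((j : ℝ) - c * t)) * Vprof α β d lam mu y)) x) ∧
    (∀ j : ℤ, ∀ t : ℝ, 0 < t →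
      deriv (fun s => Real.exp (-mu * ((j : ℝ) - c * s))) t
        = deriv f 0 * Real.exp (-mu * ((j : ℝ) - c * t))
          + α * (Real.exp (-mu * ((j : ℝ) - c * t)) * Vprof α β d lam mu 0
             + Real.exp (-mu * (((j : ℝ) - 1) - c * t)) * Vprof α β d lam mu 1)
          - 2 * β * Real.exp (-mu * ((j : ℝ) - c * t))) ∧
    (∀ j : ℤ, ∀ t : ℝ, 0 < t →
      -d * deriv (fun y => Real.exp (-mu * ((j : ℝ) - c * t)) * Vprof α β d lam mu y) 0
          + α * (Real.exp (-mu * ((j : ℝ) - c * t)) * Vprof α β d lam mu 0)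
        = β * Real.exp (-mu * ((j : ℝ) - c * t))) ∧
    (∀ j : ℤ, ∀ t : ℝ, 0 < t →
      d * deriv (fun y => Real.exp (-mu * ((j : ℝ) - c * t)) * Vprof α β d lam mu y) 1
          + α * (Real.exp (-mu * ((j : ℝ) - c * t)) * Vprof α β d lam mu 1)
        = β * Real.exp (-mu * (((j : ℝ) + 1) - c * t))) := by
  have hlam_pos : 0 < lam := hlam0.trans hlam
  have hy : 1 < yfun α β d (deriv f 0) lam := hygt lam hlam
  have hmu_arcosh : mu = arcosh (yfun α β d (deriv f 0) lam) := hmu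
  have hmuc : mu * c = lam := by rw [hc, mul_div_cancel₀ _ (hmu_arcosh ▸ arcosh_pos hy).ne']
  have hdisp := Vprof_dispersion hα hβ hd hlam_pos (hmu_arcosh ▸ cosh_arcosh hy.le)
  refine ⟨fun x hx => Vprof_pos hα hβ hd hlam_pos mu hx, ?_, ?_, ?_, ?_⟩
  · intro j t _ x _
    rw [((hasDerivAt_exp_travelling mu c j t).mul_const _).deriv, deriv_const_mul_field',
      deriv_const_mul_field', mul_left_comm, mul_deriv_deriv_Vprof hd hlam_pos.le, hmuc]
    ring
  · intro j t _
    rw [(hasDerivAt_exp_travelling mu c j t).deriv, hmuc,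
      show -mu * ((j : ℝ) - 1 - c * t) = -mu * (j - c * t) + mu by ring, exp_add]
    linear_combination (-exp (-mu * (j - c * t))) * hdisp
  · intro j t _
    rw [deriv_const_mul_field']
    linear_combination exp (-mu * (j - c * t)) * robin_Vprof_zero (β := β) hα hd hlam_pos mu
  · intro j t _
    rw [deriv_const_mul_field', show -mu * ((j : ℝ) + 1 - c * t) = -mu * (j - c * t) + -mu by ring,
      exp_add]
    linear_combination exp (-mu * (j - c * t)) * robin_Vprof_one (β := β) hα hd hlam_pos mu

/-- **Exponential solutions of the linearized system**: for every `λ > λ₀`, setting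
`μ = μ(λ)`, `c = λ/μ`, the profile `V` is positive on `[0,1]` and the family
`(v_j(t,x), ρ_j(t)) = (e^{−μ(j−ct)} V(x), e^{−μ(j−ct)})` solves the city-road system
linearized at the trivial state. -/
theorem exponential_solutions_linearized
    (α β d : ℝ) (hα : 0 < α) (hβ : 0 < β) (hd : 0 < d)
    (f : ℝ → ℝ) (hf : ContDiff ℝ 1 f) (hf0 : f 0 = 0) (hf1 : f 1 = 0)
    (hfpos : ∀ u ∈ Ioo (0:ℝ) 1, 0 < f u ∧ f u ≤ deriv f 0 * u)
    (hr : 0 < deriv f 0)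
    (lam0 : ℝ) (hlam0 : 0 < lam0)
    (hy0 : yfun α β d (deriv f 0) lam0 = 1)
    (hygt : ∀ lam' : ℝ, lam0 < lam' → 1 < yfun α β d (deriv f 0) lam')
    (lam : ℝ) (hlam : lam0 < lam)
    (mu c : ℝ) (hmu : mu = mufun α β d (deriv f 0) lam) (hc : c = lam / mu) :
    (∀ x ∈ Icc (0:ℝ) 1, 0 < Vprof α β d lam mu x) ∧
    (∀ j : ℤ, ∀ t : ℝ, 0 < t → ∀ x ∈ Ioo (0:ℝ) 1,
      deriv (fun s => Real.exp (-mu * ((j : ℝ) - c * s)) * Vprof α β d lam mu x) t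
        = d * deriv (deriv
            (fun y => Real.exp (-mu * ((j : ℝ) - c * t)) * Vprof α β d lam mu y)) x) ∧
    (∀ j : ℤ, ∀ t : ℝ, 0 < t →
      deriv (fun s => Real.exp (-mu * ((j : ℝ) - c * s))) t
        = deriv f 0 * Real.exp (-mu * ((j : ℝ) - c * t))
          + α * (Real.exp (-mu * ((j : ℝ) - c * t)) * Vprof α β d lam mu 0
             + Real.exp (-mu * (((j : ℝ) - 1) - c * t)) * Vprof α β d lam mu 1)
          - 2 * β * Real.exp (-mu * ((j : ℝ) - c * t))) ∧
    (∀ j : ℤ, ∀ t : ℝ, 0 < t →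
      -d * deriv (fun y => Real.exp (-mu * ((j : ℝ) - c * t)) * Vprof α β d lam mu y) 0
          + α * (Real.exp (-mu * ((j : ℝ) - c * t)) * Vprof α β d lam mu 0)
        = β * Real.exp (-mu * ((j : ℝ) - c * t))) ∧
    (∀ j : ℤ, ∀ t : ℝ, 0 < t →
      d * deriv (fun y => Real.exp (-mu * ((j : ℝ) - c * t)) * Vprof α β d lam mu y) 1
          + α * (Real.exp (-mu * ((j : ℝ) - c * t)) * Vprof α β d lam mu 1)
        = β * Real.exp (-mu * (((j : ℝ) + 1) - c * t))) :=
  exponential_solutions_linearized_general α β d hα hβ hd f lam0 hlam0 hygt lam hlam mu c hmu hc
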